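/- Let V be the simultaneous eigenspace basis vector space ⊕_L Cl(d)·v_L indexed by standard fillings L of a shifted skew shape λ/μ with d boxes, with action x_i·v_L = κ_{i,L}·v_L where κ_{i,L} = √(q(c(L_i))) and c(L_i) is the content of the box labeled i, and s_i·v_L = (1/(κ_{i+1,L} - κ_{i,L}))v_L + (1/(κ_{i+1,L} + κ_{i,L}))c_i c_{i+1} v_L + Y_{i,L} v_{s_i L}, where Y_{i,L} = √(1 - 1/(κ_{i+1,L}-κ_{i,L})² - 1/(κ_{i+1,L}+κ_{i,L})²) and v_{s_iL} = 0 if s_iL is not standard. Then s_i² v_L = v_L. -/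
import Mathlib


open CliffordAlgebra

/-- The quadratic form on `ℂ^d` with `Q(e_i) = -1`, whose Clifford algebra is `Cl(d)`. -/
noncomputable def Qd (d : ℕ) : QuadraticForm ℂ (Fin d → ℂ) :=
  QuadraticMap.weightedSumSquares ℂ (fun _ : Fin d => (-1 : ℂ))

/-- The `j`-th Clifford generator `c_j` of `Cl(d)`. -/
noncomputable def cgen (d : ℕ) (j : Fin d) : CliffordAlgebra (Qd d) :=
  CliffordAlgebra.ι (Qd d) (Pi.single j (1 : ℂ))

/-- `q a = a (a + 1)`. -/
def qval (a : ℤ) : ℤ := a * (a + 1)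

lemma cgen_sq (d : ℕ) (j : Fin d) : cgen d j * cgen d j = -1 := by
  rw [cgen, CliffordAlgebra.ι_sq_scalar]
  have : Qd d (Pi.single j 1) = -1 := by
    simp [Qd, QuadraticMap.weightedSumSquares_apply, Pi.single_apply]
  rw [this, map_neg, map_one]

lemma cgen_anti (d : ℕ) (j k : Fin d) (h : j ≠ k) :
    cgen d j * cgen d k = - (cgen d k * cgen d j) := by
  have hq : ∀ v : Fin d → ℂ, Qd d v = ∑ m, (-1:ℂ) * (v m * v m) := by
    intro v; simp [Qd, QuadraticMap.weightedSumSquares_apply, smul_eq_mul]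
  have hp : QuadraticMap.polar (Qd d) (Pi.single j 1) (Pi.single k 1) = 0 := by
    rw [QuadraticMap.polar, hq, hq, hq, ← Finset.sum_sub_distrib, ← Finset.sum_sub_distrib]
    apply Finset.sum_eq_zero
    intro m _
    by_cases hm : m = j <;> by_cases hm' : m = k <;>
      simp [hm, hm', Pi.single_apply, h, h.symm] <;> ring
  have := CliffordAlgebra.ι_mul_ι_add_swap (Q := Qd d) (Pi.single j 1) (Pi.single k 1)
  rw [hp, map_zero] at this
  rw [cgen, cgen]
  linear_combination (norm := noncomm_ring) this

/-- In the calibrated module `⊕_L Cl(d) v_L` attached to a shifted skew shape,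
with `x_j v_L = κ_{j,L} v_L` for `κ_{j,L} = √(q(c(L_j)))` and
`s_i v_L = (1/(κ_{i+1,L} - κ_{i,L})) v_L + (1/(κ_{i+1,L} + κ_{i,L})) c_i c_{i+1} v_L
+ Y_{i,L} v_{s_i L}` (with `Y_{i,L}² = 1 - 1/(κ_{i+1,L}-κ_{i,L})² - 1/(κ_{i+1,L}+κ_{i,L})²`,
the tableaux `L` and `s_i L` having their `i`, `i+1` contents interchanged, and
`v_{s_i L} = 0` — equivalently `Y_{i,L} = 0` — when `s_i L` is not standard),
one has `s_i² v_L = v_L`.  Here the span `Cl(d) v_L ⊕ Cl(d) v_{s_i L}` is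
modelled as pairs `(p, p')` of Clifford coefficients, `tw` is the algebra
automorphism of `Cl(d)` interchanging `c_i` and `c_{i+1}` (needed to move
Clifford coefficients past `s_i`), and `Sact` is the resulting action of `s_i`. -/
theorem calibrated_si_involution (d : ℕ) (i : ℕ) (hi : i + 1 < d)
    (tw : CliffordAlgebra (Qd d) →ₐ[ℂ] CliffordAlgebra (Qd d))
    (htw : ∀ j : Fin d, tw (cgen d j) =
      cgen d (Equiv.swap (⟨i, Nat.lt_of_succ_lt hi⟩ : Fin d) (⟨i + 1, hi⟩ : Fin d) j))
    (ca cb : ℤ)  -- the contents `c(L_i)` and `c(L_{i+1})`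
    (κ κ' Y : ℂ)
    (hκ : κ = ((Real.sqrt ((qval ca : ℤ) : ℝ) : ℝ) : ℂ))
    (hκ' : κ' = ((Real.sqrt ((qval cb : ℤ) : ℝ) : ℝ) : ℂ))
    (hY : Y ^ 2 = 1 - 1 / (κ' - κ) ^ 2 - 1 / (κ' + κ) ^ 2)
    (E : CliffordAlgebra (Qd d))
    (hE : E = cgen d ⟨i, Nat.lt_of_succ_lt hi⟩ * cgen d ⟨i + 1, hi⟩)
    (Sact : CliffordAlgebra (Qd d) × CliffordAlgebra (Qd d) →
      CliffordAlgebra (Qd d) × CliffordAlgebra (Qd d))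
    (hS : ∀ p, Sact p =
      (tw p.1 * ((1 / (κ' - κ)) • 1 + (1 / (κ' + κ)) • E) + Y • tw p.2,
       Y • tw p.1 + tw p.2 * ((1 / (κ - κ')) • 1 + (1 / (κ + κ')) • E))) :
    Sact (Sact ((1 : CliffordAlgebra (Qd d)), (0 : CliffordAlgebra (Qd d)))) =
      ((1 : CliffordAlgebra (Qd d)), (0 : CliffordAlgebra (Qd d))) := by
  have hne : (⟨i, Nat.lt_of_succ_lt hi⟩ : Fin d) ≠ ⟨i + 1, hi⟩ := by
    simp [Fin.ext_iff]
  have hE2 : E * E = -1 := by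
    rw [hE]
    have h1 := cgen_anti d ⟨i + 1, hi⟩ ⟨i, Nat.lt_of_succ_lt hi⟩ hne.symm
    have h2 := cgen_sq d (⟨i, Nat.lt_of_succ_lt hi⟩ : Fin d)
    have h3 := cgen_sq d (⟨i + 1, hi⟩ : Fin d)
    calc cgen d ⟨i, Nat.lt_of_succ_lt hi⟩ * cgen d ⟨i + 1, hi⟩ *
          (cgen d ⟨i, Nat.lt_of_succ_lt hi⟩ * cgen d ⟨i + 1, hi⟩)
        = cgen d ⟨i, Nat.lt_of_succ_lt hi⟩ * (cgen d ⟨i + 1, hi⟩ * cgen d ⟨i, Nat.lt_of_succ_lt hi⟩) * cgen d ⟨i + 1, hi⟩ := by noncomm_ring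
      _ = cgen d ⟨i, Nat.lt_of_succ_lt hi⟩ * (-(cgen d ⟨i, Nat.lt_of_succ_lt hi⟩ * cgen d ⟨i + 1, hi⟩)) * cgen d ⟨i + 1, hi⟩ := by rw [h1]
      _ = -((cgen d ⟨i, Nat.lt_of_succ_lt hi⟩ * cgen d ⟨i, Nat.lt_of_succ_lt hi⟩) * (cgen d ⟨i + 1, hi⟩ * cgen d ⟨i + 1, hi⟩)) := by noncomm_ring
      _ = -1 := by rw [h2, h3]; simp
  have htwE : tw E = -E := by
    rw [hE, map_mul, htw, htw, Equiv.swap_apply_left, Equiv.swap_apply_right]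
    exact cgen_anti d ⟨i + 1, hi⟩ ⟨i, Nat.lt_of_succ_lt hi⟩ hne.symm
  set α : ℂ := 1 / (κ' - κ) with hα
  set β : ℂ := 1 / (κ' + κ) with hβ
  have hα' : 1 / (κ - κ') = -α := by
    rw [hα, show κ - κ' = -(κ' - κ) by ring, one_div, inv_neg, one_div]
  have hβ' : 1 / (κ + κ') = β := by rw [hβ, add_comm]
  have hY2 : Y ^ 2 = 1 - α ^ 2 - β ^ 2 := by
    rw [hY, hα, hβ]; rw [div_pow, div_pow]; norm_num
  have h1 : Sact (1, 0) = (α • 1 + β • E, Y • 1) := by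
    rw [hS]; simp
  rw [h1, hS, hα', hβ']
  have htwA : tw (α • (1 : CliffordAlgebra (Qd d)) + β • E) = α • 1 - β • E := by
    rw [map_add, map_smul, map_smul, map_one, htwE, smul_neg, sub_eq_add_neg]
  simp only [htwA, map_smul, map_one]
  simp only [Prod.mk.injEq]
  constructor
  · -- first coordinate
    have expand : (α • (1:CliffordAlgebra (Qd d)) - β • E) * (α • 1 + β • E)
        = (α * α) • 1 + (α * β) • E - (β * α) • E - (β * β) • (E * E) := by
      simp only [mul_add, sub_mul, smul_mul_smul_comm, one_mul, mul_one]
      abel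
    rw [expand, hE2]
    have : Y • (Y • (1:CliffordAlgebra (Qd d))) = (Y ^ 2) • 1 := by
      rw [smul_smul, sq]
    rw [this, hY2]
    simp only [smul_neg, smul_smul]
    rw [sub_smul, sub_smul, one_smul]
    module
  · -- second coordinate
    have expand : (Y • (1:CliffordAlgebra (Qd d))) * ((-α) • 1 + β • E)
        = (Y * (-α)) • 1 + (Y * β) • E := by
      simp only [mul_add, smul_mul_smul_comm, one_mul, mul_one]
    rw [expand]
    rw [smul_sub, smul_smul, smul_smul]
    module
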